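/- Let A, B be maximal monotone operators on a real Hilbert space H, z ∈ H, β ∈ (0,1), r > 0, and T := (2J_{r(B_z)^{(β)}} − I) ∘ (2J_{r(A_z)^{(β)}} − I). Then the solution set S = {u : z ∈ (I+A+B)(u)} satisfies S = { (1/β)·J_{r(A_z)^{(β)}}(u) + z : u ∈ Fix(T) }. -/

import Mathlib

open scoped RealInnerProductSpace

variable {H : Type*} [NormedAddCommGroup H] [InnerProductSpace ℝ H] [CompleteSpace H]

/-- A set-valued operator is monotone. -/
def MonotoneOp (A : H → Set H) : Prop :=
  ∀ ⦃x y x' y' : H⦄, x' ∈ A x → y' ∈ A y → 0 ≤ ⟪x - y, x' - y'⟫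

/-- A set-valued operator is σ-strongly monotone. -/
def StronglyMonotoneOp (σ : ℝ) (A : H → Set H) : Prop :=
  ∀ ⦃x y x' y' : H⦄, x' ∈ A x → y' ∈ A y → σ * ‖x - y‖ ^ 2 ≤ ⟪x - y, x' - y'⟫

/-- A set-valued operator is maximal monotone. -/
def MaximalMonotoneOp (A : H → Set H) : Prop :=
  MonotoneOp A ∧ ∀ x x' : H, (∀ y y' : H, y' ∈ A y → 0 ≤ ⟪x - y, x' - y'⟫) → x' ∈ A x

/-- The operator `(A_z)^{(β)} : x ↦ 2(1-β)·A((1/β)x + z) + ((1-β)/β)x`. -/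
def pert (A : H → Set H) (z : H) (β : ℝ) : H → Set H :=
  fun x => (fun u => (2 * (1 - β)) • u + ((1 - β) / β) • x) '' A (β⁻¹ • x + z)

/-!
`T` is the Douglas–Rachford operator of the pair `M = (A_z)^{(β)}`, `N = (B_z)^{(β)}`, which are
monotone. For monotone `M`, `N` the resolvent `J_{rM}` maps `Fix T` onto `zer (M + N)`: if
`x = u + r m` with `m ∈ M u` is fixed, then `2 J_{rM} x - x = u - r m` is sent back to `u` by
`J_{rN}`, so `-m ∈ N u`, and conversely; uniqueness of resolvent values comes from monotonicity.
Finally, `p ∈ M u` and `-p ∈ N u` add up to `2(1 - β)(a + b + w - z) = 0` with `w = β⁻¹ u + z`,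
`a ∈ A w`, `b ∈ B w`, so `zer (M + N)` is carried onto `S` by the bijection `u ↦ β⁻¹ u + z`.
-/

section

omit [CompleteSpace H]

/-- `J` is a selection of the resolvent `J_{rM} = (I + rM)⁻¹`. -/
def IsResolvent (r : ℝ) (M : H → Set H) (J : H → H) : Prop :=
  ∀ w, ∃ m ∈ M (J w), w = J w + r • m

def reflected (J : H → H) (x : H) : H :=
  (2:ℝ) • J x - x

theorem MonotoneOp.eq_of_add_smul_eq {M : H → Set H} (hM : MonotoneOp M) {r : ℝ} (hr : 0 < r)
    {u v m m' : H} (hm : m ∈ M u) (hm' : m' ∈ M v) (heq : u + r • m = v + r • m') :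
    u = v := by
  have hdiff : m - m' = -r⁻¹ • (u - v) := by
    rw [neg_smul, ← smul_neg, eq_inv_smul_iff₀ hr.ne']
    linear_combination (norm := module) heq
  have hmono := hM hm hm'
  rw [hdiff, real_inner_smul_right, real_inner_self_eq_norm_sq] at hmono
  have : ‖u - v‖ ^ 2 ≤ 0 := by nlinarith [inv_pos.mpr hr]
  simpa [sub_eq_zero] using this

theorem IsResolvent.apply_add_smul {r : ℝ} {M : H → Set H} {J : H → H} (hJ : IsResolvent r M J)
    (hM : MonotoneOp M) (hr : 0 < r) {u m : H} (hm : m ∈ M u) : J (u + r • m) = u := by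
  obtain ⟨m', hm', hw⟩ := hJ (u + r • m)
  exact (hM.eq_of_add_smul_eq hr hm hm' hw).symm

theorem IsResolvent.image_fixedPoints_reflected_comp {r : ℝ} {M N : H → Set H} {JM JN : H → H}
    (hJM : IsResolvent r M JM) (hJN : IsResolvent r N JN) (hM : MonotoneOp M)
    (hN : MonotoneOp N) (hr : 0 < r) :
    JM '' Function.fixedPoints (reflected JN ∘ reflected JM) = {u | ∃ m ∈ M u, -m ∈ N u} := by
  ext u
  constructor
  · rintro ⟨x, hx, rfl⟩
    obtain ⟨m, hm, hxm⟩ := hJM x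
    obtain ⟨n, hn, hyn⟩ := hJN (reflected JM x)
    have hJN_eq : JN (reflected JM x) = JM x := by
      have hfix : (2:ℝ) • JN (reflected JM x) - reflected JM x = x := hx
      apply smul_right_injective H (two_ne_zero (α := ℝ))
      unfold reflected at hfix ⊢
      linear_combination (norm := module) hfix
    rw [hJN_eq] at hn hyn
    refine ⟨m, hm, ?_⟩
    convert hn using 1
    apply smul_right_injective H hr.ne'
    unfold reflected at hyn
    linear_combination (norm := module) hxm + hyn
  · rintro ⟨m, hm, hn⟩
    have hJM_eq := hJM.apply_add_smul hM hr hm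
    have hJN_eq := hJN.apply_add_smul hN hr hn
    have hrefl : reflected JM (u + r • m) = u + r • -m := by
      simp only [reflected, hJM_eq]; module
    refine ⟨u + r • m, ?_, hJM_eq⟩
    simp only [Function.mem_fixedPoints, Function.IsFixedPt, Function.comp_apply, hrefl]
    simp only [reflected, hJN_eq]; module

theorem MonotoneOp.pert {A : H → Set H} (hA : MonotoneOp A) (z : H) {β : ℝ} (hβ0 : 0 < β)
    (hβ1 : β < 1) : MonotoneOp (pert A z β) := by
  rintro x y _ _ ⟨a, ha, rfl⟩ ⟨b, hb, rfl⟩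
  have hab : 0 ≤ ⟪x - y, a - b⟫ := by
    have h := hA ha hb
    rw [show β⁻¹ • x + z - (β⁻¹ • y + z) = β⁻¹ • (x - y) by module, real_inner_smul_left] at h
    exact nonneg_of_mul_nonneg_right h (inv_pos.mpr hβ0)
  have hsplit : (2 * (1 - β)) • a + ((1 - β) / β) • x - ((2 * (1 - β)) • b + ((1 - β) / β) • y)
      = (2 * (1 - β)) • (a - b) + ((1 - β) / β) • (x - y) := by module
  rw [hsplit, inner_add_right, real_inner_smul_right, real_inner_smul_right,
    real_inner_self_eq_norm_sq]
  have hc : 0 ≤ 2 * (1 - β) := by linarith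
  have hd : 0 ≤ (1 - β) / β := div_nonneg (by linarith) hβ0.le
  positivity

theorem exists_mem_pert_neg_mem_pert_iff {A B : H → Set H} {z : H} {β : ℝ} (hβ0 : β ≠ 0)
    (hβ1 : β ≠ 1) (u : H) :
    (∃ p ∈ pert A z β u, -p ∈ pert B z β u) ↔
      ∃ a ∈ A (β⁻¹ • u + z), ∃ b ∈ B (β⁻¹ • u + z), z = β⁻¹ • u + z + a + b := by
  have hc : 2 * (1 - β) ≠ 0 := mul_ne_zero two_ne_zero (sub_ne_zero.mpr hβ1.symm)
  -- the two `((1 - β)/β) • u` terms add up to `2(1 - β) • β⁻¹ • u`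
  have hsum : ∀ a b : H, (2 * (1 - β)) • a + ((1 - β) / β) • u + ((2 * (1 - β)) • b
      + ((1 - β) / β) • u) = (2 * (1 - β)) • (β⁻¹ • u + z + a + b - z) := by
    intro a b
    match_scalars <;> field_simp <;> ring
  constructor
  · rintro ⟨_, ⟨a, ha, rfl⟩, ⟨b, hb, hneg⟩⟩
    refine ⟨a, ha, b, hb, ?_⟩
    have := hsum a b
    beta_reduce at hneg
    rw [hneg, add_neg_cancel, eq_comm, smul_eq_zero, sub_eq_zero] at this
    exact (this.resolve_left hc).symm
  · rintro ⟨a, ha, b, hb, hz⟩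
    refine ⟨_, ⟨a, ha, rfl⟩, ⟨b, hb, ?_⟩⟩
    rw [eq_neg_iff_add_eq_zero, add_comm, hsum, ← hz, sub_self, smul_zero]

end

theorem stmt6 (A B : H → Set H) (hA : MaximalMonotoneOp A) (hB : MaximalMonotoneOp B)
    (z : H) (β r : ℝ) (hβ : β ∈ Set.Ioo (0:ℝ) 1) (hr : 0 < r) (JA JB : H → H)
    (hJA : ∀ w : H, ∃ m ∈ pert A z β (JA w), w = JA w + r • m)
    (hJB : ∀ w : H, ∃ m ∈ pert B z β (JB w), w = JB w + r • m) :
    {u : H | ∃ a ∈ A u, ∃ b ∈ B u, z = u + a + b} =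
      (fun u => β⁻¹ • JA u + z) ''
        {x : H | (2:ℝ) • JB ((2:ℝ) • JA x - x) - ((2:ℝ) • JA x - x) = x} := by
  obtain ⟨hβ0, hβ1⟩ := hβ
  set S := {u : H | ∃ a ∈ A u, ∃ b ∈ B u, z = u + a + b}
  set f : H → H := fun u => β⁻¹ • u + z
  have hf : Function.Surjective f := fun w => ⟨β • (w - z), by simp [f, hβ0.ne']⟩
  have hzeros : f ⁻¹' S = {u | ∃ p ∈ pert A z β u, -p ∈ pert B z β u} := by
    ext u
    exact (exists_mem_pert_neg_mem_pert_iff hβ0.ne' hβ1.ne u).symm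
  calc S = f '' (f ⁻¹' S) := (Set.image_preimage_eq S hf).symm
    _ = f '' (JA '' Function.fixedPoints (reflected JB ∘ reflected JA)) := by
      rw [hzeros, IsResolvent.image_fixedPoints_reflected_comp hJA hJB (hA.1.pert z hβ0 hβ1)
        (hB.1.pert z hβ0 hβ1) hr]
    _ = _ := Set.image_image f JA _
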